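/- For every integer k ≥ 1 and all real N_E, N_I, the k-th partial derivative of I2 with respect to N_I exists and equals (b_II/√a_I)^k · ∫₀^∞ e^{−s²/2}·s^{k−1}·(e^{s·w̃_F} − e^{s·w̃_R}) ds. -/

import Mathlib

open MeasureTheory Set

open MeasureTheory

/-- The stationary firing-rate functional `I2` of the inhibitory population. -/
noncomputable def I2 (VR VF aI bEE bEI bII νext : ℝ) (NE NI : ℝ) : ℝ :=
  ∫ s in Set.Ioi (0:ℝ),
    Real.exp (-s ^ 2 / 2) / s *
      (Real.exp (s * ((VF - (bEI * NE - bII * NI + (bEI - bEE) * νext)) / Real.sqrt aI)) -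
       Real.exp (s * ((VR - (bEI * NE - bII * NI + (bEI - bEE) * νext)) / Real.sqrt aI)))

namespace I2Aux

/-- the integrand -/
noncomputable def f (c AF AR : ℝ) (n : ℕ) (y s : ℝ) : ℝ :=
  Real.exp (-s ^ 2 / 2) * s ^ ((n : ℤ) - 1) *
    (Real.exp (s * (AF + c * y)) - Real.exp (s * (AR + c * y)))

noncomputable def G (c AF AR : ℝ) (n : ℕ) (y : ℝ) : ℝ :=
  ∫ s in Ioi (0:ℝ), f c AF AR n y s

lemma f_meas (c AF AR : ℝ) (n : ℕ) (y : ℝ) :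
    AEStronglyMeasurable (f c AF AR n y) (volume.restrict (Ioi 0)) := by
  apply ContinuousOn.aestronglyMeasurable ?_ measurableSet_Ioi
  apply ContinuousOn.mul
  · apply ContinuousOn.mul
    · exact (Real.continuous_exp.comp (by continuity)).continuousOn
    · exact continuousOn_id.zpow₀ _ (fun s hs => Or.inl (ne_of_gt hs))
  · exact ((Real.continuous_exp.comp (by continuity)).sub
      (Real.continuous_exp.comp (by continuity))).continuousOn

lemma exp_sub_exp_le {a b : ℝ} (h : b ≤ a) :
    Real.exp a - Real.exp b ≤ (a - b) * Real.exp a := by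
  have h1 : (b - a) + 1 ≤ Real.exp (b - a) := Real.add_one_le_exp _
  have h2 : Real.exp b = Real.exp (b - a) * Real.exp a := by
    rw [← Real.exp_add]; ring_nf
  nlinarith [Real.exp_pos a]

lemma f_bound {c AF AR : ℝ} (hAR : AR ≤ AF) (n : ℕ) {y s M : ℝ} (hs : 0 < s)
    (hM : AF + c * y ≤ M) :
    ‖f c AF AR n y s‖ ≤
      (AF - AR) * Real.exp (M ^ 2) * (s ^ (n : ℝ) * Real.exp (-(1/4) * s ^ 2)) := by
  have hwr : s * (AR + c * y) ≤ s * (AF + c * y) := by nlinarith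
  have hd0 : 0 ≤ Real.exp (s * (AF + c * y)) - Real.exp (s * (AR + c * y)) :=
    sub_nonneg.2 (Real.exp_le_exp.2 hwr)
  have hzpos : (0:ℝ) < s ^ ((n : ℤ) - 1) := zpow_pos hs _
  have habs : ‖f c AF AR n y s‖ = f c AF AR n y s := by
    rw [Real.norm_eq_abs, abs_of_nonneg]
    exact mul_nonneg (mul_nonneg (Real.exp_pos _).le hzpos.le) hd0
  rw [habs]
  have hdle : Real.exp (s * (AF + c * y)) - Real.exp (s * (AR + c * y)) ≤
      s * (AF - AR) * Real.exp (s * M) := by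
    calc Real.exp (s * (AF + c * y)) - Real.exp (s * (AR + c * y))
        ≤ (s * (AF + c * y) - s * (AR + c * y)) * Real.exp (s * (AF + c * y)) :=
          exp_sub_exp_le hwr
      _ ≤ s * (AF - AR) * Real.exp (s * M) := by
          have : s * (AF + c * y) - s * (AR + c * y) = s * (AF - AR) := by ring
          rw [this]
          exact mul_le_mul_of_nonneg_left (Real.exp_le_exp.2 (by nlinarith))
            (by nlinarith)
  calc f c AF AR n y s
      ≤ Real.exp (-s ^ 2 / 2) * s ^ ((n : ℤ) - 1) * (s * (AF - AR) * Real.exp (s * M)) := by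
        exact mul_le_mul_of_nonneg_left hdle (mul_nonneg (Real.exp_pos _).le hzpos.le)
    _ = (AF - AR) * (s ^ ((n : ℤ) - 1) * s) * Real.exp (-s ^ 2 / 2 + s * M) := by
        rw [Real.exp_add]; ring
    _ = (AF - AR) * s ^ (n : ℤ) * Real.exp (-s ^ 2 / 2 + s * M) := by
        rw [← zpow_add_one₀ (ne_of_gt hs)]; ring_nf
    _ ≤ (AF - AR) * s ^ (n : ℤ) * (Real.exp (M ^ 2) * Real.exp (-(1/4) * s ^ 2)) := by
        apply mul_le_mul_of_nonneg_left
        · rw [← Real.exp_add]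
          exact Real.exp_le_exp.2 (by nlinarith [sq_nonneg (s / 2 - M)])
        · exact mul_nonneg (by linarith) (zpow_nonneg hs.le _)
    _ = (AF - AR) * Real.exp (M ^ 2) * (s ^ (n : ℝ) * Real.exp (-(1/4) * s ^ 2)) := by
        rw [zpow_natCast, ← Real.rpow_natCast s n]; ring


lemma bound_int (C : ℝ) (n : ℕ) :
    IntegrableOn (fun s : ℝ => C * (s ^ (n : ℝ) * Real.exp (-(1/4) * s ^ 2))) (Ioi 0) := by
  exact ((integrableOn_rpow_mul_exp_neg_mul_sq (by norm_num)
    (by have := Nat.cast_nonneg (α:=ℝ) n; linarith : (-1:ℝ) < (n:ℝ))).const_mul C)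

lemma f_int {c AF AR : ℝ} (hAR : AR ≤ AF) (n : ℕ) (y : ℝ) :
    IntegrableOn (f c AF AR n y) (Ioi 0) := by
  apply Integrable.mono' (bound_int ((AF - AR) * Real.exp ((AF + c * y) ^ 2)) n)
    (f_meas c AF AR n y)
  filter_upwards [ae_restrict_mem measurableSet_Ioi] with s hs
  simpa [mul_assoc] using f_bound hAR n (mem_Ioi.1 hs) (le_refl (AF + c * y))

lemma G_hasDerivAt {c AF AR : ℝ} (hAR : AR ≤ AF) (hc : 0 ≤ c) (n : ℕ) (y₀ : ℝ) :
    HasDerivAt (G c AF AR n) (c * G c AF AR (n + 1) y₀) y₀ := by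
  set M := AF + c * (|y₀| + 1) with hMdef
  have key := hasDerivAt_integral_of_dominated_loc_of_deriv_le
    (F := fun y s => f c AF AR n y s) (F' := fun y s => c * f c AF AR (n + 1) y s)
    (x₀ := y₀) (s := Metric.ball y₀ 1)
    (bound := fun s => c * ((AF - AR) * Real.exp (M ^ 2) *
      (s ^ ((n + 1 : ℕ) : ℝ) * Real.exp (-(1/4) * s ^ 2))))
    (μ := volume.restrict (Ioi 0)) (Metric.ball_mem_nhds y₀ one_pos)
    (Filter.Eventually.of_forall fun y => f_meas c AF AR n y)
    (f_int hAR n y₀)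
    ((f_meas c AF AR (n+1) y₀).const_mul c)
    ?_ ?_ ?_
  · have : (∫ s in Ioi (0:ℝ), c * f c AF AR (n+1) y₀ s) = c * G c AF AR (n+1) y₀ := by
      rw [G, integral_const_mul]
    rw [← this]
    exact key.2
  · -- bound
    filter_upwards [ae_restrict_mem measurableSet_Ioi] with s hs
    intro y hy
    have hys : AF + c * y ≤ M := by
      rw [Metric.mem_ball, Real.dist_eq] at hy
      have : y ≤ |y₀| + 1 := by
        cases' abs_sub_lt_iff.1 hy with h1 h2
        have := le_abs_self y₀; linarith
      have := mul_le_mul_of_nonneg_left this hc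
      linarith
    have hb := f_bound hAR (n+1) (mem_Ioi.1 hs) hys
    rw [norm_mul, Real.norm_eq_abs, abs_of_nonneg hc]
    calc c * ‖f c AF AR (n+1) y s‖ ≤ c * ((AF - AR) * Real.exp (M ^ 2) *
          (s ^ ((n + 1 : ℕ) : ℝ) * Real.exp (-(1/4) * s ^ 2))) :=
        mul_le_mul_of_nonneg_left hb hc
      _ = _ := rfl
  · -- bound integrable
    simpa [mul_assoc] using ((bound_int ((AF - AR) * Real.exp (M ^ 2)) (n+1)).const_mul c)
  · -- differentiability
    filter_upwards [ae_restrict_mem measurableSet_Ioi] with s hs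
    intro y hy
    have hs0 : (0:ℝ) < s := mem_Ioi.1 hs
    have h1 : HasDerivAt (fun y : ℝ => Real.exp (s * (AF + c * y)))
        (Real.exp (s * (AF + c * y)) * (s * c)) y := by
      have hin : HasDerivAt (fun y : ℝ => s * (AF + c * y)) (s * c) y := by
        simpa using (((hasDerivAt_id y).const_mul c).const_add AF).const_mul s
      exact hin.exp
    have h2 : HasDerivAt (fun y : ℝ => Real.exp (s * (AR + c * y)))
        (Real.exp (s * (AR + c * y)) * (s * c)) y := by
      have hin : HasDerivAt (fun y : ℝ => s * (AR + c * y)) (s * c) y := by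
        simpa using (((hasDerivAt_id y).const_mul c).const_add AR).const_mul s
      exact hin.exp
    have h3 := ((h1.sub h2).const_mul (Real.exp (-s ^ 2 / 2) * s ^ ((n : ℤ) - 1)))
    convert h3 using 1
    · rfl
    · rfl
    have hzp : s ^ ((n : ℤ) - 1) * s = s ^ (((n:ℕ) + 1 : ℤ) - 1) := by
      rw [← zpow_add_one₀ (ne_of_gt hs0)]; ring_nf
    unfold f
    push_cast
    rw [← hzp]
    ring

lemma deriv_G {c AF AR : ℝ} (hAR : AR ≤ AF) (hc : 0 ≤ c) (n : ℕ) :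
    deriv (G c AF AR n) = fun y => c * G c AF AR (n + 1) y := by
  funext y
  exact (G_hasDerivAt hAR hc n y).deriv

lemma contDiff_G {c AF AR : ℝ} (hAR : AR ≤ AF) (hc : 0 ≤ c) (m : ℕ) (n : ℕ) :
    ContDiff ℝ (m : WithTop ℕ∞) (G c AF AR n) := by
  induction m generalizing n with
  | zero =>
    rw [Nat.cast_zero, contDiff_zero]
    exact continuous_iff_continuousAt.2 fun y => (G_hasDerivAt hAR hc n y).continuousAt
  | succ m ih =>
    rw [show ((m + 1 : ℕ) : WithTop ℕ∞) = (m : WithTop ℕ∞) + 1 by push_cast; rfl,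
      contDiff_succ_iff_deriv]
    refine ⟨fun y => (G_hasDerivAt hAR hc n y).differentiableAt, ?_, ?_⟩
    · intro h; simp at h
    · rw [deriv_G hAR hc n]
      exact contDiff_const.mul (ih (n + 1))

lemma iteratedDeriv_G {c AF AR : ℝ} (hAR : AR ≤ AF) (hc : 0 ≤ c) (j : ℕ) (n : ℕ) :
    iteratedDeriv j (G c AF AR n) = fun y => c ^ j * G c AF AR (n + j) y := by
  induction j with
  | zero => simp
  | succ j ih =>
    rw [iteratedDeriv_succ, ih]
    funext y
    have : HasDerivAt (fun y => c ^ j * G c AF AR (n + j) y)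
        (c ^ j * (c * G c AF AR (n + j + 1) y)) y :=
      (G_hasDerivAt hAR hc (n + j) y).const_mul _
    rw [this.deriv]
    rw [show n + (j + 1) = n + j + 1 by ring]
    ring

end I2Aux

/-- The `k`-th partial derivative of `I2` with respect to `N_I` exists and equals
`(b_II/√a_I)^k · ∫₀^∞ e^{−s²/2}·s^{k−1}·(e^{s·w̃_F} − e^{s·w̃_R}) ds`. -/
theorem I2_iteratedDeriv_NI (VR VF aI bEE bEI bII νext : ℝ)
    (hV : VR < VF) (haI : 0 < aI)
    (hEE : 0 ≤ bEE) (hEI : 0 ≤ bEI) (hII : 0 ≤ bII) (hν : 0 ≤ νext)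
    (k : ℕ) (hk : 1 ≤ k) (NE NI : ℝ) :
    ContDiff ℝ (k : ℕ∞) (fun y => I2 VR VF aI bEE bEI bII νext NE y) ∧
    iteratedDeriv k (fun y => I2 VR VF aI bEE bEI bII νext NE y) NI =
      (bII / Real.sqrt aI) ^ k *
        ∫ s in Set.Ioi (0:ℝ),
          Real.exp (-s ^ 2 / 2) * s ^ (k - 1) *
            (Real.exp (s * ((VF - (bEI * NE - bII * NI + (bEI - bEE) * νext)) / Real.sqrt aI)) -
             Real.exp (s * ((VR - (bEI * NE - bII * NI + (bEI - bEE) * νext)) / Real.sqrt aI))) := by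
  have hsq : (0:ℝ) < Real.sqrt aI := Real.sqrt_pos.2 haI
  set c := bII / Real.sqrt aI with hc_def
  set AF := (VF - bEI * NE - (bEI - bEE) * νext) / Real.sqrt aI with hAF_def
  set AR := (VR - bEI * NE - (bEI - bEE) * νext) / Real.sqrt aI with hAR_def
  have hc : 0 ≤ c := div_nonneg hII hsq.le
  have hAR : AR ≤ AF := by
    rw [hAF_def, hAR_def]
    gcongr <;> linarith
  have hargF : ∀ y : ℝ,
      (VF - (bEI * NE - bII * y + (bEI - bEE) * νext)) / Real.sqrt aI = AF + c * y := by
    intro y; rw [hAF_def, hc_def]; ring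
  have hargR : ∀ y : ℝ,
      (VR - (bEI * NE - bII * y + (bEI - bEE) * νext)) / Real.sqrt aI = AR + c * y := by
    intro y; rw [hAR_def, hc_def]; ring
  have h0 : (fun y => I2 VR VF aI bEE bEI bII νext NE y) = I2Aux.G c AF AR 0 := by
    funext y
    unfold I2 I2Aux.G I2Aux.f
    congr 1
    funext s
    rw [hargF y, hargR y, show ((0:ℕ):ℤ) - 1 = -1 by norm_num, zpow_neg_one]
    ring
  constructor
  · rw [h0]
    exact_mod_cast I2Aux.contDiff_G hAR hc k 0
  · rw [h0, I2Aux.iteratedDeriv_G hAR hc k 0]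
    beta_reduce
    congr 1
    unfold I2Aux.G I2Aux.f
    refine setIntegral_congr_fun measurableSet_Ioi fun s hs' => ?_
    rw [hargF NI, hargR NI, show ((0 + k : ℕ):ℤ) - 1 = ((k - 1 : ℕ):ℤ) by omega,
      zpow_natCast]
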